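/- Let P be a monic polynomial of degree n with P(0) ≠ 0, where P(z) - P(0) = (z-b₁)⋯(z-b_{m₁})·(z-c₁)^{l₁}⋯(z-c_{m₂})^{l_{m₂}} with distinct roots, l_i ≥ 2, and each l_i < n. Suppose g is a nonconstant meromorphic function on ℂ and P∘f = (P∘g)/(c₁·(P∘g - P(0))) for some nonconstant meromorphic f and nonzero constant c₁. Then every zero of g - b_j (1 ≤ j ≤ m₁) has multiplicity at least n, and every zero of g - c_i (1 ≤ i ≤ m₂) has multiplicity at least 2. -/

import Mathlib

/-
Near a zero of `g - a` of order `κ`, the function `P ∘ g - P(0)` vanishes to order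
`rootMultiplicity a (P - P(0)) * κ`, so `P ∘ f = P ∘ g / (c₁ (P ∘ g - P(0)))` has a pole of that
order. A polynomial of degree `n` in `f` has a pole only where `f` does, and then of order `n`
times that of `f`. Hence `n` divides `rootMultiplicity a (P - P(0)) * κ`; this multiplicity is
`1` at the `b_j` and `l_i ∈ (0, n)` at the `c_i`.
-/

open scoped Classical
open Polynomial Filter MeasureTheory

noncomputable section

/-- `f` is meromorphic on all of `ℂ`. -/
def Mero (f : ℂ → ℂ) : Prop := ∀ z : ℂ, MeromorphicAt f z

/-- `f` is a nonconstant function. -/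
def Nonconst (f : ℂ → ℂ) : Prop := ¬ ∃ c : ℂ, ∀ z, f z = c

/-- The order (of vanishing) of a meromorphic function at a point, as an integer. -/
def mOrder (f : ℂ → ℂ) (z : ℂ) : ℤ :=
  if h : MeromorphicAt f z then ((meromorphicOrderAt f z).untopD 0) else 0

/-- Pole multiplicity of `f` at `z`. -/
def poleMult (f : ℂ → ℂ) (z : ℂ) : ℕ := (-(mOrder f z)).toNat

/-- Multiplicity of `z` as an `a`-point of `f`. -/
def aMult (f : ℂ → ℂ) (a : ℂ) (z : ℂ) : ℕ := (mOrder (fun w => f w - a) z).toNat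

/-- Unintegrated counting function for a multiplicity assignment `m`. -/
def cnt (m : ℂ → ℕ) (t : ℝ) : ℝ := ∑' z : {z : ℂ | ‖z‖ ≤ t}, (m z.1 : ℝ)

/-- Integrated Nevanlinna counting function for a multiplicity assignment `m`. -/
def Nint (m : ℂ → ℕ) (r : ℝ) : ℝ := ∫ t in (1:ℝ)..r, cnt m t / t

/-- Integrated counting function of poles, `N(r,∞;f)`. -/
def Npoles (f : ℂ → ℂ) (r : ℝ) : ℝ := Nint (poleMult f) r

/-- Reduced counting function of poles, `N̄(r,∞;f)`. -/
def NbarPoles (f : ℂ → ℂ) (r : ℝ) : ℝ := Nint (fun z => min (poleMult f z) 1) r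

/-- Counting function of `a`-points, `N(r,a;f)`. -/
def Nval (f : ℂ → ℂ) (a : ℂ) (r : ℝ) : ℝ := Nint (aMult f a) r

/-- Reduced counting function of `a`-points, `N̄(r,a;f)`. -/
def NbarVal (f : ℂ → ℂ) (a : ℂ) (r : ℝ) : ℝ := Nint (fun z => min (aMult f a z) 1) r

/-- Positive part of the logarithm. -/
def logPlus (x : ℝ) : ℝ := max (Real.log x) 0

/-- Nevanlinna proximity function `m(r,f)`. -/
def prox (f : ℂ → ℂ) (r : ℝ) : ℝ :=
  (2 * Real.pi)⁻¹ * ∫ θ in (0:ℝ)..(2 * Real.pi),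
    logPlus ‖f (r * Complex.exp (θ * Complex.I))‖

/-- Nevanlinna characteristic function `T(r,f)`. -/
def Tchar (f : ℂ → ℂ) (r : ℝ) : ℝ := prox f r + Npoles f r

/-- Multiplicity of `z` as an `a`-point of `f`, truncated with weight `l`. -/
def wMult (f : ℂ → ℂ) (a : ℂ) (l : ℕ) (z : ℂ) : ℕ :=
  if aMult f a z ≤ l then aMult f a z else l + 1

/-- The weighted multiplicity function of `E_f(S,l)` at a point. -/
def EsetW (f : ℂ → ℂ) (S : Finset ℂ) (l : ℕ) (z : ℂ) : ℕ := ∑ a ∈ S, wMult f a l z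

/-- The multiplicity function of `E_f(S)` (CM sharing) at a point. -/
def Eset (f : ℂ → ℂ) (S : Finset ℂ) (z : ℂ) : ℕ := ∑ a ∈ S, aMult f a z

/-- `P` is a strong uniqueness polynomial for meromorphic functions. -/
def SUPM (P : ℂ[X]) : Prop :=
  ∀ f g : ℂ → ℂ, Mero f → Mero g → Nonconst f → Nonconst g →
    ∀ c : ℂ, c ≠ 0 → (∀ z, P.eval (f z) = c * P.eval (g z)) → f = g

/-- `P` is a uniqueness polynomial for meromorphic functions. -/
def UPM (P : ℂ[X]) : Prop :=
  ∀ f g : ℂ → ℂ, Mero f → Mero g → Nonconst f → Nonconst g →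
    (∀ z, P.eval (f z) = P.eval (g z)) → f = g

/-- `P` is a strong uniqueness polynomial for entire functions. -/
def SUPE (P : ℂ[X]) : Prop :=
  ∀ f g : ℂ → ℂ, Differentiable ℂ f → Differentiable ℂ g → Nonconst f → Nonconst g →
    ∀ c : ℂ, c ≠ 0 → (∀ z, P.eval (f z) = c * P.eval (g z)) → f = g

/-- `P` is a uniqueness polynomial for entire functions. -/
def UPE (P : ℂ[X]) : Prop :=
  ∀ f g : ℂ → ℂ, Differentiable ℂ f → Differentiable ℂ g → Nonconst f → Nonconst g →
    (∀ z, P.eval (f z) = P.eval (g z)) → f = g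

/-- `S` is a unique range set for meromorphic functions with weight `l`. -/
def URSMweight (S : Finset ℂ) (l : ℕ) : Prop :=
  ∀ f g : ℂ → ℂ, Mero f → Mero g → Nonconst f → Nonconst g →
    (∀ z, EsetW f S l z = EsetW g S l z) → f = g

/-- `S` is a unique range set for meromorphic functions (CM sharing). -/
def URSM (S : Finset ℂ) : Prop :=
  ∀ f g : ℂ → ℂ, Mero f → Mero g → Nonconst f → Nonconst g →
    (∀ z, Eset f S z = Eset g S z) → f = g

/-- The set of distinct simple roots of a polynomial. -/
def simpleRoots (Q : ℂ[X]) : Finset ℂ := Q.roots.toFinset.filter (fun z => Q.rootMultiplicity z = 1)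

/-- The set of distinct multiple roots of a polynomial. -/
def multRoots (Q : ℂ[X]) : Finset ℂ := Q.roots.toFinset.filter (fun z => 2 ≤ Q.rootMultiplicity z)

end

open Polynomial Filter Topology Asymptotics

theorem MeromorphicAt.polynomial_eval {f : ℂ → ℂ} {z : ℂ} (hf : MeromorphicAt f z) (Q : ℂ[X]) :
    MeromorphicAt (fun w => Q.eval (f w)) z := by
  induction Q using Polynomial.induction_on' with
  | add p q hp hq => simpa using hp.fun_add hq
  | monomial n a => simpa using (MeromorphicAt.const a z).fun_mul (hf.fun_pow n)

theorem meromorphicOrderAt_polynomial_eval_nonneg {f : ℂ → ℂ} {z : ℂ} (hf : MeromorphicAt f z)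
    (Q : ℂ[X]) (h : 0 ≤ meromorphicOrderAt f z) :
    0 ≤ meromorphicOrderAt (fun w => Q.eval (f w)) z := by
  obtain ⟨c, hc⟩ := tendsto_nhds_of_meromorphicOrderAt_nonneg hf h
  exact (tendsto_nhds_iff_meromorphicOrderAt_nonneg (hf.polynomial_eval Q)).mp
    ⟨Q.eval c, (Q.continuous.tendsto c).comp hc⟩

theorem meromorphicOrderAt_polynomial_eval_of_neg {f : ℂ → ℂ} {z : ℂ} (hf : MeromorphicAt f z)
    {Q : ℂ[X]} (hQ : Q ≠ 0) (h : meromorphicOrderAt f z < 0) :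
    meromorphicOrderAt (fun w => Q.eval (f w)) z = Q.natDegree * meromorphicOrderAt f z := by
  have hlead : Q.leadingCoeff ≠ 0 := leadingCoeff_ne_zero.mpr hQ
  have hinfty := tendsto_cobounded_of_meromorphicOrderAt_neg h
  have hmono : MeromorphicAt (fun w => Q.leadingCoeff * f w ^ Q.natDegree) z := by fun_prop
  have hratio : meromorphicOrderAt
      (fun w => Q.eval (f w) / (Q.leadingCoeff * f w ^ Q.natDegree)) z = 0 := by
    refine (tendsto_ne_zero_iff_meromorphicOrderAt_eq_zero
      ((hf.polynomial_eval Q).fun_div hmono)).mp ⟨1, one_ne_zero, ?_⟩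
    refine (isEquivalent_iff_tendsto_one ?_).mp
      ((isEquivalent_cobounded_leading_monomial (P := Q)).comp_tendsto hinfty :)
    filter_upwards [hinfty.eventually_ne_cobounded 0] with w hw
    exact mul_ne_zero hlead (pow_ne_zero _ hw)
  rw [fun_meromorphicOrderAt_div (hf.polynomial_eval Q) hmono, fun_meromorphicOrderAt_mul
    (MeromorphicAt.const _ z) (hf.fun_pow _), fun_meromorphicOrderAt_pow hf,
    meromorphicOrderAt_const, if_neg hlead, zero_add] at hratio
  exact (LinearOrderedAddCommGroupWithTop.sub_eq_zero
    (WithTop.mul_ne_top (WithTop.natCast_ne_top _) h.ne_top)).mp hratio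

theorem natDegree_dvd_of_meromorphicOrderAt_polynomial_eval_eq_neg {f : ℂ → ℂ} {z : ℂ}
    (hf : MeromorphicAt f z) {Q : ℂ[X]} (hQ : Q ≠ 0) {k : ℕ}
    (h : meromorphicOrderAt (fun w => Q.eval (f w)) z = -(k : ℤ)) : Q.natDegree ∣ k := by
  obtain rfl | hk := k.eq_zero_or_pos
  · exact dvd_zero _
  have hpole : meromorphicOrderAt f z < 0 := by
    by_contra! hnonneg
    have := h ▸ meromorphicOrderAt_polynomial_eval_nonneg hf Q hnonneg
    norm_cast at this
    omega
  obtain ⟨p, hp⟩ := WithTop.ne_top_iff_exists.mp hpole.ne_top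
  rw [meromorphicOrderAt_polynomial_eval_of_neg hf hQ hpole, ← hp] at h
  norm_cast at h
  exact Int.natCast_dvd_natCast.mp ⟨-p, by linarith⟩

theorem meromorphicOrderAt_polynomial_eval_eq_rootMultiplicity_mul {g : ℂ → ℂ} {z a : ℂ}
    (hg : MeromorphicAt g z) {Q : ℂ[X]} (hQ : Q ≠ 0)
    (h : 0 < meromorphicOrderAt (fun w => g w - a) z) :
    meromorphicOrderAt (fun w => Q.eval (g w)) z =
      Q.rootMultiplicity a * meromorphicOrderAt (fun w => g w - a) z := by
  set m := Q.rootMultiplicity a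
  set R := Q /ₘ (X - C a) ^ m
  have hfactor : (fun w => Q.eval (g w)) = fun w => (g w - a) ^ m * R.eval (g w) := by
    ext w
    conv_lhs => rw [← pow_mul_divByMonic_rootMultiplicity_eq Q a]
    simp [R, m]
  have hga : Tendsto g (𝓝[≠] z) (𝓝 a) := by
    simpa using (tendsto_zero_of_meromorphicOrderAt_pos h).add_const a
  have hR : meromorphicOrderAt (fun w => R.eval (g w)) z = 0 :=
    (tendsto_ne_zero_iff_meromorphicOrderAt_eq_zero (hg.polynomial_eval R)).mp
      ⟨R.eval a, eval_divByMonic_pow_rootMultiplicity_ne_zero a hQ,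
        (R.continuous.tendsto a).comp hga⟩
  rw [hfactor, fun_meromorphicOrderAt_mul (by fun_prop) (hg.polynomial_eval R), hR, add_zero,
    fun_meromorphicOrderAt_pow (by fun_prop)]

theorem meromorphicOrderAt_div_const_mul_sub {F : ℂ → ℂ} {z a c : ℂ} (hF : MeromorphicAt F z)
    (ha : a ≠ 0) (hc : c ≠ 0) (h : 0 < meromorphicOrderAt (fun w => F w - a) z) :
    meromorphicOrderAt (fun w => F w / (c * (F w - a))) z =
      -meromorphicOrderAt (fun w => F w - a) z := by
  have hFa : Tendsto F (𝓝[≠] z) (𝓝 a) := by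
    simpa using (tendsto_zero_of_meromorphicOrderAt_pos h).add_const a
  have hF0 : meromorphicOrderAt F z = 0 :=
    (tendsto_ne_zero_iff_meromorphicOrderAt_eq_zero hF).mp ⟨a, ha, hFa⟩
  rw [fun_meromorphicOrderAt_div hF (by fun_prop), fun_meromorphicOrderAt_mul (by fun_prop)
    (by fun_prop), meromorphicOrderAt_const, if_neg hc, hF0, zero_add, zero_sub]

theorem rootMultiplicity_prod_X_sub_C_pow {ι : Type*} [Fintype ι] {u : ι → ℂ}
    (hu : Function.Injective u) (e : ι → ℕ) (i : ι) :
    (∏ k, (X - C (u k)) ^ e k).rootMultiplicity (u i) = e i := by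
  classical
  have hne : ∏ k, (X - C (u k)) ^ e k ≠ 0 :=
    Finset.prod_ne_zero_iff.mpr fun k _ => pow_ne_zero _ (X_sub_C_ne_zero _)
  rw [← count_roots, roots_prod _ _ hne, Multiset.count_bind]
  simp [roots_pow, Multiset.count_singleton, hu.eq_iff]

theorem meromorphicOrderAt_sub_eq_aMult {f : ℂ → ℂ} {a z : ℂ} (h : 0 < aMult f a z) :
    meromorphicOrderAt (fun w => f w - a) z = (aMult f a z : ℤ) := by
  unfold aMult mOrder at *
  split_ifs at h ⊢
  · cases hord : meromorphicOrderAt (fun w => f w - a) z with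
    | top => simp [hord] at h
    | coe n => simp only [hord, WithTop.untopD_coe] at h ⊢; norm_cast; omega
  · simp at h

theorem natDegree_dvd_rootMultiplicity_mul_aMult {P : ℂ[X]} {f g : ℂ → ℂ} {a c z : ℂ}
    (hP0 : P.eval 0 ≠ 0) (hP : P - C (P.eval 0) ≠ 0) (hf : MeromorphicAt f z)
    (hg : MeromorphicAt g z) (hc : c ≠ 0)
    (heq : ∀ w, P.eval (f w) = P.eval (g w) / (c * (P.eval (g w) - P.eval 0)))
    (hroot : 0 < (P - C (P.eval 0)).rootMultiplicity a) (ha : 0 < aMult g a z) :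
    P.natDegree ∣ (P - C (P.eval 0)).rootMultiplicity a * aMult g a z := by
  set m := (P - C (P.eval 0)).rootMultiplicity a
  set κ := aMult g a z
  have hPne : P ≠ 0 := by rintro rfl; simp at hP
  have hκ : meromorphicOrderAt (fun w => g w - a) z = (κ : ℤ) :=
    meromorphicOrderAt_sub_eq_aMult ha
  have hQg : meromorphicOrderAt (fun w => P.eval (g w) - P.eval 0) z = ((m * κ : ℕ) : ℤ) := by
    have := meromorphicOrderAt_polynomial_eval_eq_rootMultiplicity_mul hg hP
      (by rw [hκ]; exact_mod_cast ha)
    simp only [eval_sub, eval_C] at this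
    rw [this, hκ]
    norm_cast
  have hPf : meromorphicOrderAt (fun w => P.eval (f w)) z = -((m * κ : ℕ) : ℤ) := by
    rw [funext heq, meromorphicOrderAt_div_const_mul_sub (hg.polynomial_eval P) hP0 hc
      (by rw [hQg]; exact_mod_cast Nat.mul_pos hroot ha), hQg]
  exact natDegree_dvd_of_meromorphicOrderAt_polynomial_eval_eq_neg hf hPne hPf

open Polynomial in
theorem multiplicity_bounds_for_g_general (P : ℂ[X]) (n m₁ m₂ : ℕ)
    (hdeg : P.natDegree = n)
    (h0 : P.eval 0 ≠ 0)
    (b : Fin m₁ → ℂ) (cc : Fin m₂ → ℂ) (l : Fin m₂ → ℕ)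
    (hinj : Function.Injective (Sum.elim b cc))
    (hl2 : ∀ i, 2 ≤ l i) (hln : ∀ i, l i < n)
    (hfact : P - C (P.eval 0) =
      (∏ j : Fin m₁, (X - C (b j))) * ∏ i : Fin m₂, (X - C (cc i)) ^ (l i))
    (f g : ℂ → ℂ) (hf : Mero f) (hg : Mero g)
    (c₁ : ℂ) (hc₁ : c₁ ≠ 0)
    (heq : ∀ z, P.eval (f z) = P.eval (g z) / (c₁ * (P.eval (g z) - P.eval 0))) :
    (∀ z, ∀ j : Fin m₁, 0 < aMult g (b j) z → n ≤ aMult g (b j) z) ∧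
    (∀ z, ∀ i : Fin m₂, 0 < aMult g (cc i) z → 2 ≤ aMult g (cc i) z) := by
  have hsplit : P - C (P.eval 0) =
      ∏ s : Fin m₁ ⊕ Fin m₂, (X - C (Sum.elim b cc s)) ^ Sum.elim (fun _ => 1) l s := by
    simp [hfact, Fintype.prod_sum_type]
  have hmult : ∀ s, (P - C (P.eval 0)).rootMultiplicity (Sum.elim b cc s) =
      Sum.elim (fun _ => 1) l s := fun s => by
    rw [hsplit, rootMultiplicity_prod_X_sub_C_pow hinj]
  have hP : P - C (P.eval 0) ≠ 0 := by
    rw [hsplit]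
    exact (monic_prod_of_monic _ _ fun s _ => (monic_X_sub_C _).pow _).ne_zero
  have hdvd : ∀ s z, 0 < Sum.elim (fun _ => 1) l s → 0 < aMult g (Sum.elim b cc s) z →
      n ∣ Sum.elim (fun _ => 1) l s * aMult g (Sum.elim b cc s) z := fun s z hroot ha => by
    rw [← hdeg, ← hmult s]
    exact natDegree_dvd_rootMultiplicity_mul_aMult h0 hP (hf z) (hg z) hc₁ heq
      (by rwa [hmult s]) ha
  refine ⟨fun z j ha => ?_, fun z i ha => ?_⟩
  · have := hdvd (Sum.inl j) z Nat.one_pos ha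
    rw [Sum.elim_inl, Sum.elim_inl, one_mul] at this
    exact Nat.le_of_dvd ha this
  · have := hdvd (Sum.inr i) z (by simp only [Sum.elim_inr]; linarith [hl2 i]) ha
    rw [Sum.elim_inr, Sum.elim_inr] at this
    by_contra! hsimple
    rw [show aMult g (cc i) z = 1 by omega, mul_one] at this
    exact (hln i).not_ge (Nat.le_of_dvd (by linarith [hl2 i]) this)

open Polynomial in
theorem multiplicity_bounds_for_g (P : ℂ[X]) (n m₁ m₂ : ℕ)
    (hmonic : P.Monic) (hdeg : P.natDegree = n)
    (h0 : P.eval 0 ≠ 0)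
    (b : Fin m₁ → ℂ) (cc : Fin m₂ → ℂ) (l : Fin m₂ → ℕ)
    (hinj : Function.Injective (Sum.elim b cc))
    (hl2 : ∀ i, 2 ≤ l i) (hln : ∀ i, l i < n)
    (hfact : P - C (P.eval 0) =
      (∏ j : Fin m₁, (X - C (b j))) * ∏ i : Fin m₂, (X - C (cc i)) ^ (l i))
    (f g : ℂ → ℂ) (hf : Mero f) (hg : Mero g)
    (hfc : Nonconst f) (hgc : Nonconst g)
    (c₁ : ℂ) (hc₁ : c₁ ≠ 0)
    (heq : ∀ z, P.eval (f z) = P.eval (g z) / (c₁ * (P.eval (g z) - P.eval 0))) :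
    (∀ z, ∀ j : Fin m₁, 0 < aMult g (b j) z → n ≤ aMult g (b j) z) ∧
    (∀ z, ∀ i : Fin m₂, 0 < aMult g (cc i) z → 2 ≤ aMult g (cc i) z) :=
  multiplicity_bounds_for_g_general P n m₁ m₂ hdeg h0 b cc l hinj hl2 hln hfact f g hf hg c₁ hc₁ heq
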